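/- arXiv:1001.3728 — 3 statements merged into one kernel-verified Lean document; each statement's English description precedes it below -/
import Mathlib

section
/- Let σ, c, π > 0 and T > 0. Define v(t,x) = Φ(−x/(σ√(T−t))) + Φ((x − cπ(T−t))/(σ√(T−t))) · exp(−(cπ/σ²)x + π²c²(T−t)/(2σ²)) for t < T, where Φ is the standard normal CDF. Then v satisfies the backward heat equation ∂_t v + (σ²/2) ∂_{xx} v = 0 on (0,T) × ℝ. -/
/-!
Put `τ = T - t`. Each of the two terms of `v` has the form
`w(τ, x) = Φ(β (x + α σ² τ) / (σ √τ)) · exp(α x + α² σ² τ / 2)` with `β = ±1`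
(`α = 0, β = -1` and `α = -cπ/σ², β = 1`): it is `E[e^{α(x + σW_τ)}; β(x + σW_τ) > 0]`,
the heat flow of the datum `e^{αx} 1{βx > 0}`, written out by a Girsanov shift. Hence `w` solves
`∂_τ w = σ²/2 ∂²ₓ w`, which is checked directly from `Φ' = φ` and `φ'(y) = -y φ(y)`; the
`φ(ξ)`-terms cancel because `σ²/2 · (β / (σ √τ))² = 1 / (2τ)` when `β² = 1`.
-/

open Set Real

noncomputable def stdNormalCDF (x : ℝ) : ℝ :=
  ∫ y in Set.Iic x, Real.exp (-y ^ 2 / 2) / Real.sqrt (2 * π)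

noncomputable def stdNormalPDF (y : ℝ) : ℝ := exp (-y ^ 2 / 2) / √(2 * π)

lemma hasDerivAt_stdNormalPDF (y : ℝ) : HasDerivAt stdNormalPDF (-y * stdNormalPDF y) y := by
  have h : HasDerivAt (fun z : ℝ => -z ^ 2 / 2) (-y) y := by
    simpa using ((hasDerivAt_pow 2 y).neg.div_const 2).congr_deriv (by simp; ring)
  exact (h.exp.div_const _).congr_deriv (by unfold stdNormalPDF; ring)

lemma continuous_stdNormalPDF : Continuous stdNormalPDF := by
  unfold stdNormalPDF; fun_prop

lemma integrable_stdNormalPDF : MeasureTheory.Integrable stdNormalPDF := by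
  convert (integrable_exp_neg_mul_sq (by norm_num : (0 : ℝ) < 1 / 2)).div_const (√(2 * π)) using 2
  unfold stdNormalPDF; ring_nf

lemma stdNormalCDF_eq_add_intervalIntegral (x : ℝ) :
    stdNormalCDF x = stdNormalCDF 0 + ∫ y in (0 : ℝ)..x, stdNormalPDF y := by
  have := intervalIntegral.integral_Iic_sub_Iic integrable_stdNormalPDF.integrableOn
    integrable_stdNormalPDF.integrableOn (a := 0) (b := x)
  unfold stdNormalCDF; unfold stdNormalPDF at this ⊢
  linarith

lemma hasDerivAt_stdNormalCDF (x : ℝ) : HasDerivAt stdNormalCDF (stdNormalPDF x) x := by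
  rw [funext stdNormalCDF_eq_add_intervalIntegral]
  exact (intervalIntegral.integral_hasDerivAt_right integrable_stdNormalPDF.intervalIntegrable
    continuous_stdNormalPDF.stronglyMeasurable.stronglyMeasurableAtFilter
    continuous_stdNormalPDF.continuousAt).const_add _

lemma hasDerivAt_stdNormalCDF_comp_mul_exp {g h : ℝ → ℝ} {g' h' y : ℝ} (hg : HasDerivAt g g' y)
    (hh : HasDerivAt h h' y) :
    HasDerivAt (fun z => stdNormalCDF (g z) * exp (h z))
      ((g' * stdNormalPDF (g y) + h' * stdNormalCDF (g y)) * exp (h y)) y :=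
  (((hasDerivAt_stdNormalCDF (g y)).comp y hg).mul hh.exp).congr_deriv
    (by simp only [Function.comp_apply]; ring)

lemma hasDerivAt_stdNormalCDF_comp_mul_exp_deriv {g h : ℝ → ℝ} {a c y : ℝ} (hg : HasDerivAt g a y)
    (hh : HasDerivAt h c y) :
    HasDerivAt (fun z => (a * stdNormalPDF (g z) + c * stdNormalCDF (g z)) * exp (h z))
      ((a * (2 * c - a * g y) * stdNormalPDF (g y) + c ^ 2 * stdNormalCDF (g y)) * exp (h y)) y :=
  ((((hasDerivAt_stdNormalPDF (g y)).comp y hg).const_mul a).add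
    (((hasDerivAt_stdNormalCDF (g y)).comp y hg).const_mul c) |>.mul hh.exp).congr_deriv
    (by simp only [Function.comp_apply, Pi.add_apply]; ring)

/-- The derivatives are given explicitly, so that a sum of solutions is again a solution. -/
def IsHeatSolutionAt (κ : ℝ) (u : ℝ → ℝ → ℝ) (τ x : ℝ) : Prop :=
  ∃ (ux : ℝ → ℝ) (uxx : ℝ), (∀ y, HasDerivAt (u τ) (ux y) y) ∧ HasDerivAt ux uxx x ∧
    HasDerivAt (fun s => u s x) (κ * uxx) τ

namespace IsHeatSolutionAt

variable {κ τ x : ℝ} {u w : ℝ → ℝ → ℝ}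

lemma add (hu : IsHeatSolutionAt κ u τ x) (hw : IsHeatSolutionAt κ w τ x) :
    IsHeatSolutionAt κ (fun s y => u s y + w s y) τ x := by
  obtain ⟨ux, uxx, hux, huxx, hut⟩ := hu
  obtain ⟨wx, wxx, hwx, hwxx, hwt⟩ := hw
  exact ⟨ux + wx, uxx + wxx, fun y => (hux y).add (hwx y), huxx.add hwxx,
    (hut.add hwt).congr_deriv (by ring)⟩

lemma deriv_eq (hu : IsHeatSolutionAt κ u τ x) :
    deriv (fun s => u s x) τ = κ * iteratedDeriv 2 (u τ) x := by
  obtain ⟨ux, uxx, hux, huxx, hut⟩ := hu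
  rw [iteratedDeriv_succ, iteratedDeriv_one, funext fun y => (hux y).deriv, hut.deriv,
    huxx.deriv]

end IsHeatSolutionAt

noncomputable def gaussHeatSol (σ α β τ x : ℝ) : ℝ :=
  stdNormalCDF (β * (x + α * σ ^ 2 * τ) / (σ * √τ)) * exp (α * x + α ^ 2 * σ ^ 2 * τ / 2)

section gaussHeatSol

variable {σ α β τ : ℝ}

lemma hasDerivAt_gaussHeatSol_arg (hσ : σ ≠ 0) (hτ : 0 < τ) (x : ℝ) :
    HasDerivAt (fun s => β * (x + α * σ ^ 2 * s) / (σ * √s))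
      (α * β * σ / √τ - β * (x + α * σ ^ 2 * τ) / (σ * √τ) / (2 * τ)) τ := by
  have hsq : √τ ≠ 0 := (sqrt_pos.2 hτ).ne'
  have hnum : HasDerivAt (fun s => β * (x + α * σ ^ 2 * s)) (β * (α * σ ^ 2)) τ :=
    (((hasDerivAt_id τ).const_mul (α * σ ^ 2)).const_add x).const_mul β |>.congr_deriv (by ring)
  refine (hnum.div ((hasDerivAt_sqrt hτ.ne').const_mul σ) (mul_ne_zero hσ hsq)).congr_deriv ?_
  field_simp
  rw [sq_sqrt hτ.le]

lemma isHeatSolutionAt_gaussHeatSol (hσ : σ ≠ 0) (hβ : β ^ 2 = 1) (hτ : 0 < τ) (x : ℝ) :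
    IsHeatSolutionAt (σ ^ 2 / 2) (gaussHeatSol σ α β) τ x := by
  have harg (y : ℝ) : HasDerivAt (fun z => β * (z + α * σ ^ 2 * τ) / (σ * √τ)) (β / (σ * √τ)) y :=
    (((hasDerivAt_id y).add_const _).const_mul β).div_const _ |>.congr_deriv (by ring)
  have hexp (y : ℝ) : HasDerivAt (fun z => α * z + α ^ 2 * σ ^ 2 * τ / 2) α y :=
    ((hasDerivAt_id y).const_mul α).add_const _ |>.congr_deriv (by ring)
  have hexpt : HasDerivAt (fun s => α * x + α ^ 2 * σ ^ 2 * s / 2) (α ^ 2 * σ ^ 2 / 2) τ :=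
    (((hasDerivAt_id τ).const_mul _).div_const 2).const_add _ |>.congr_deriv (by ring)
  refine ⟨_, _, fun y => hasDerivAt_stdNormalCDF_comp_mul_exp (harg y) (hexp y),
    hasDerivAt_stdNormalCDF_comp_mul_exp_deriv (harg x) (hexp x),
    (hasDerivAt_stdNormalCDF_comp_mul_exp (hasDerivAt_gaussHeatSol_arg hσ hτ x) hexpt).congr_deriv
      ?_⟩
  have hkey : σ ^ 2 / 2 * (β / (σ * √τ)) ^ 2 = 1 / (2 * τ) := by
    rw [div_pow, mul_pow, sq_sqrt hτ.le, hβ]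
    field_simp
  linear_combination (norm := skip) (β * (x + α * σ ^ 2 * τ) / (σ * √τ) *
    stdNormalPDF (β * (x + α * σ ^ 2 * τ) / (σ * √τ)) * exp (α * x + α ^ 2 * σ ^ 2 * τ / 2)) * hkey
  field_simp
  ring

end gaussHeatSol

theorem explicit_v_solves_backward_heat_general
    (σ c pen T : ℝ) (hσ : 0 < σ)
    (v : ℝ → ℝ → ℝ)
    (hv : ∀ t < T, ∀ x : ℝ,
      v t x = stdNormalCDF (-x / (σ * Real.sqrt (T - t)))
        + stdNormalCDF ((x - c * pen * (T - t)) / (σ * Real.sqrt (T - t)))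
          * Real.exp (-(c * pen / σ ^ 2) * x + pen ^ 2 * c ^ 2 * (T - t) / (2 * σ ^ 2))) :
    ∀ t ∈ Ioo 0 T, ∀ x : ℝ,
      deriv (fun s => v s x) t + σ ^ 2 / 2 * iteratedDeriv 2 (fun y => v t y) x = 0 := by
  rintro t ⟨-, htT⟩ x
  set u : ℝ → ℝ → ℝ := fun τ y =>
    gaussHeatSol σ 0 (-1) τ y + gaussHeatSol σ (-(c * pen / σ ^ 2)) 1 τ y
  have hvu : ∀ s < T, (fun y => v s y) = u (T - s) := fun s hs => funext fun y => by
    rw [hv s hs y]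
    simp only [u, gaussHeatSol]
    congr 1
    · simp
    · congr 2
      · field_simp
        ring
      · field_simp
  have hu : IsHeatSolutionAt (σ ^ 2 / 2) u (T - t) x :=
    (isHeatSolutionAt_gaussHeatSol hσ.ne' (by norm_num) (sub_pos.2 htT) x).add
      (isHeatSolutionAt_gaussHeatSol hσ.ne' (by norm_num) (sub_pos.2 htT) x)
  have hvt : deriv (fun s => v s x) t = -deriv (fun τ => u τ x) (T - t) := by
    rw [← deriv_comp_const_sub]
    refine Filter.EventuallyEq.deriv_eq ?_
    filter_upwards [Iio_mem_nhds htT] with s hs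
    exact congrFun (hvu s hs) x
  rw [hvt, hu.deriv_eq, hvu t htT]
  ring

/-- the explicit function
`v(t,x) = Φ(−x/(σ√(T−t))) + Φ((x − cπ(T−t))/(σ√(T−t))) · exp(−(cπ/σ²)x + π²c²(T−t)/(2σ²))`
satisfies the backward heat equation `∂_t v + (σ²/2) ∂_{xx} v = 0` on `(0,T) × ℝ`. -/
theorem explicit_v_solves_backward_heat
    (σ c pen T : ℝ) (hσ : 0 < σ) (hc : 0 < c) (hpen : 0 < pen) (hT : 0 < T)
    (v : ℝ → ℝ → ℝ)
    (hv : ∀ t < T, ∀ x : ℝ,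
      v t x = stdNormalCDF (-x / (σ * Real.sqrt (T - t)))
        + stdNormalCDF ((x - c * pen * (T - t)) / (σ * Real.sqrt (T - t)))
          * Real.exp (-(c * pen / σ ^ 2) * x + pen ^ 2 * c ^ 2 * (T - t) / (2 * σ ^ 2))) :
    ∀ t ∈ Ioo 0 T, ∀ x : ℝ,
      deriv (fun s => v s x) t + σ ^ 2 / 2 * iteratedDeriv 2 (fun y => v t y) x = 0 :=
  explicit_v_solves_backward_heat_general σ c pen T hσ v hv
end

section
/- Let Δτ > 0, λ > 0, N ∈ ℕ, and for i = 0,…,N−1 let F_i, H_i ≥ 0 and set G_i = F_i + H_i + λ. Let ν_j ≥ 0 with Σ_j ν_j = 1 and let y_i = b_i + λΔτ·Σ_j ν_j c_{i,j} with all b_i ≥ 0 and c_{i,j} ≥ 0. Suppose the vector (β_0,…,β_{N−1}) with boundary values β_{−1}, β_N ≥ 0 satisfies, for each i, −F_i Δτ β_{i−1} + (1 + G_i Δτ) β_i − H_i Δτ β_{i+1} = y_i. Then β_i ≥ 0 for all i = 0,…,N−1. -/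
/-!
Take an index `i₀` where `β` attains its minimum over `{-1, …, N}`. If it is a boundary index the
minimum is non-negative by assumption. Otherwise, since `G = F + H + λ` with `F, H ≥ 0`, the scheme
at `i₀` rewrites as `(1 + λΔτ) β i₀ = y i₀ + FΔτ (β (i₀-1) - β i₀) + HΔτ (β (i₀+1) - β i₀)`, and
at a minimum both differences are non-negative, so `(1 + λΔτ) β i₀ ≥ y i₀ ≥ 0`.
-/

open Finset

theorem Int.nonneg_of_nonneg_at_local_min {β : ℤ → ℝ} {a b : ℤ} (hab : a ≤ b)
    (ha : 0 ≤ β a) (hb : 0 ≤ β b)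
    (hmin : ∀ i, a < i → i < b → β i ≤ β (i - 1) → β i ≤ β (i + 1) → 0 ≤ β i) :
    ∀ i ∈ Icc a b, 0 ≤ β i := by
  obtain ⟨i₀, hi₀, hle⟩ := exists_min_image (Icc a b) β ⟨a, left_mem_Icc.mpr hab⟩
  rw [mem_Icc] at hi₀
  have hβi₀ : 0 ≤ β i₀ := by
    rcases eq_or_lt_of_le hi₀.1 with rfl | hai₀
    · exact ha
    rcases eq_or_lt_of_le hi₀.2 with rfl | hi₀b
    · exact hb
    exact hmin i₀ hai₀ hi₀b (hle _ (mem_Icc.mpr ⟨by omega, by omega⟩))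
      (hle _ (mem_Icc.mpr ⟨by omega, by omega⟩))
  exact fun i hi => hβi₀.trans (hle i hi)

theorem le_mul_of_implicit_step_of_local_min {f h l d βm β₀ βp y : ℝ}
    (hf : 0 ≤ f) (hh : 0 ≤ h) (hd : 0 ≤ d) (hm : β₀ ≤ βm) (hp : β₀ ≤ βp)
    (heq : -f * d * βm + (1 + (f + h + l) * d) * β₀ - h * d * βp = y) :
    y ≤ (1 + l * d) * β₀ := by
  have hfm : 0 ≤ f * d * (βm - β₀) := mul_nonneg (mul_nonneg hf hd) (sub_nonneg.mpr hm)
  have hhp : 0 ≤ h * d * (βp - β₀) := mul_nonneg (mul_nonneg hh hd) (sub_nonneg.mpr hp)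
  linarith

theorem discrete_maximum_principle_lower_general
    (N : ℕ) (Δτ lam : ℝ) (hΔτ : 0 < Δτ) (hlam : 0 < lam)
    (F G H b : ℤ → ℝ) (J : Finset ℤ) (ν : ℤ → ℝ) (c : ℤ → ℤ → ℝ) (y : ℤ → ℝ)
    (hF : ∀ i, 0 ≤ F i) (hH : ∀ i, 0 ≤ H i)
    (hG : ∀ i, G i = F i + H i + lam)
    (hν : ∀ j ∈ J, 0 ≤ ν j)
    (hb : ∀ i, 0 ≤ b i) (hc : ∀ i j, 0 ≤ c i j)
    (hy : ∀ i, y i = b i + lam * Δτ * ∑ j ∈ J, ν j * c i j)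
    (β : ℤ → ℝ)
    (hbdry_left : 0 ≤ β (-1)) (hbdry_right : 0 ≤ β N)
    (heq : ∀ i : ℤ, 0 ≤ i → i < N →
      -(F i) * Δτ * β (i - 1) + (1 + G i * Δτ) * β i - H i * Δτ * β (i + 1) = y i) :
    ∀ i : ℤ, 0 ≤ i → i < N → 0 ≤ β i := by
  have hy_nonneg : ∀ i, 0 ≤ y i := fun i => hy i ▸ add_nonneg (hb i)
    (mul_nonneg (by positivity) (sum_nonneg fun j hj => mul_nonneg (hν j hj) (hc i j)))
  have hβ := Int.nonneg_of_nonneg_at_local_min (by omega) hbdry_left hbdry_right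
    fun i hi hiN hm hp => by
      have hstep := le_mul_of_implicit_step_of_local_min (hF i) (hH i) hΔτ.le hm hp
        (hG i ▸ heq i (by omega) hiN)
      exact nonneg_of_mul_nonneg_right ((hy_nonneg i).trans hstep) (by positivity)
  exact fun i hi hiN => hβ i (mem_Icc.mpr ⟨by omega, by omega⟩)

/-- discrete maximum principle (lower bound) for the implicit
finite-difference scheme: if all coefficients and right-hand-side data are
non-negative, `G_i = F_i + H_i + λ`, and the boundary values are non-negative,
then the solution `β` of the implicit step is non-negative. -/
theorem discrete_maximum_principle_lower
    (N : ℕ) (Δτ lam : ℝ) (hΔτ : 0 < Δτ) (hlam : 0 < lam)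
    (F G H b : ℤ → ℝ) (J : Finset ℤ) (ν : ℤ → ℝ) (c : ℤ → ℤ → ℝ) (y : ℤ → ℝ)
    (hF : ∀ i, 0 ≤ F i) (hH : ∀ i, 0 ≤ H i)
    (hG : ∀ i, G i = F i + H i + lam)
    (hν : ∀ j ∈ J, 0 ≤ ν j) (hνsum : ∑ j ∈ J, ν j = 1)
    (hb : ∀ i, 0 ≤ b i) (hc : ∀ i j, 0 ≤ c i j)
    (hy : ∀ i, y i = b i + lam * Δτ * ∑ j ∈ J, ν j * c i j)
    (β : ℤ → ℝ)
    (hbdry_left : 0 ≤ β (-1)) (hbdry_right : 0 ≤ β N)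
    (heq : ∀ i : ℤ, 0 ≤ i → i < N →
      -(F i) * Δτ * β (i - 1) + (1 + G i * Δτ) * β i - H i * Δτ * β (i + 1) = y i) :
    ∀ i : ℤ, 0 ≤ i → i < N → 0 ≤ β i :=
  discrete_maximum_principle_lower_general N Δτ lam hΔτ hlam F G H b J ν c y hF hH hG hν hb hc hy β
    hbdry_left hbdry_right heq
end

section
/- Let Δx > 0, λ > 0, and suppose σ*² := min_i,n σ²(τ_n, x_i) > 0 and Σ* := min_i,n Σ_i^n satisfy −Σ*·Δx ≤ σ*²/(2λ). Then for every i, n and every value β ≥ 0 of the reduction argument, the finite-difference coefficients F_i^n(β) = σ²(τ_{n+1},x_i)/(2Δx²) + r(β)/Δx + λΣ_i^{n+1}/Δx, H_i^n = σ²(τ_{n+1},x_i)/(2Δx²), and G_i^n(β) = F_i^n(β) + H_i^n + λ are all non-negative, where r : [0,∞) → [0,∞). -/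
open Set

/-! The drift term `r(β)/Δx` and the diffusion term `H` are non-negative, so only the
diffusion-plus-jump part of `F` needs care. Factoring out `λ/Δx²` writes it as
`(σ²/(2λ) + Σ·Δx)·λ/Δx²`, which is non-negative exactly under the CFL condition; and the
condition at the minimal values `σ*², Σ*` implies it at every grid point. -/

lemma cfl_diffusion_add_jump_nonneg {Δx lam s S : ℝ} (hΔx : 0 < Δx) (hlam : 0 < lam)
    (hCFL : -S * Δx ≤ s / (2 * lam)) :
    0 ≤ s / (2 * Δx ^ 2) + lam * S / Δx := by
  have hfactor : s / (2 * Δx ^ 2) + lam * S / Δx = (s / (2 * lam) + S * Δx) * (lam / Δx ^ 2) := by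
    field_simp
  rw [hfactor]
  exact mul_nonneg (by linarith) (by positivity)

lemma cfl_of_cfl_min {Δx lam s S sMin SMin : ℝ} (hΔx : 0 < Δx) (hlam : 0 < lam)
    (hs : sMin ≤ s) (hS : SMin ≤ S) (hCFL : -SMin * Δx ≤ sMin / (2 * lam)) :
    -S * Δx ≤ s / (2 * lam) :=
  calc -S * Δx ≤ -SMin * Δx := by gcongr
    _ ≤ sMin / (2 * lam) := hCFL
    _ ≤ s / (2 * lam) := by gcongr

/-- under the CFL-type condition `−Sig*·Δx ≤ σ*²/(2λ)`, the
finite-difference coefficients `F_i^n(β)`, `H_i^n` and `G_i^n(β) = F_i^n(β) + H_i^n + λ`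
of the implicit scheme are all non-negative. -/
theorem scheme_coefficients_nonneg
    (Δx lam : ℝ) (hΔx : 0 < Δx) (hlam : 0 < lam)
    (σsq : ℕ → ℕ → ℝ) (Sig : ℕ → ℕ → ℝ) (σstarSq Sigstar : ℝ)
    (hσstar_pos : 0 < σstarSq)
    (hσstar : ∀ i n, σstarSq ≤ σsq n i)
    (hSigstar : ∀ i n, Sigstar ≤ Sig i n)
    (hCFL : -Sigstar * Δx ≤ σstarSq / (2 * lam))
    (r : ℝ → ℝ) (hr : ∀ a ∈ Ici (0:ℝ), 0 ≤ r a) :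
    ∀ i n : ℕ, ∀ β : ℝ, 0 ≤ β →
      0 ≤ σsq (n + 1) i / (2 * Δx ^ 2) + r β / Δx + lam * Sig i (n + 1) / Δx ∧
      0 ≤ σsq (n + 1) i / (2 * Δx ^ 2) ∧
      0 ≤ (σsq (n + 1) i / (2 * Δx ^ 2) + r β / Δx + lam * Sig i (n + 1) / Δx)
            + σsq (n + 1) i / (2 * Δx ^ 2) + lam := by
  intro i n β hβ
  have hσ := hσstar i (n + 1)
  have hdiffJump := cfl_diffusion_add_jump_nonneg hΔx hlam
    (cfl_of_cfl_min hΔx hlam hσ (hSigstar i (n + 1)) hCFL)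
  have hdrift : 0 ≤ r β / Δx := div_nonneg (hr β hβ) hΔx.le
  have hH : 0 ≤ σsq (n + 1) i / (2 * Δx ^ 2) := by
    have := hσstar_pos.trans_le hσ
    positivity
  exact ⟨by linarith, hH, by linarith⟩
end
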